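/- arXiv:2301.08561 — 3 statements merged into one kernel-verified Lean document; each statement's English description precedes it below -/
import Mathlib

section
/- For all vectors a, b ∈ ℝ^N and all m ≥ 2, the inequality (|a|^(m-2) a − |b|^(m-2) b) · (a − b) ≥ 2^(2−m) |a − b|^m holds, where · denotes the Euclidean inner product and |·| the Euclidean norm. -/
/-!
Put `x = ‖a‖`, `y = ‖b‖` and `s = ‖a - b‖²`. For fixed `x` and `y` the inner product is an affine
function of `s`, while the left-hand side `2^(2-m) s^(m/2)` is convex in `s`, because `m / 2 ≥ 1`.
Since `s` lies in `[(x - y)², (x + y)²]`, it suffices to check the two endpoints. These are the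
cases of collinear `a` and `b`. At the lower endpoint, superadditivity of `t ↦ t^(m-1)` gives
`|x - y|^m ≤ (x^(m-1) - y^(m-1)) (x - y)`. At the upper endpoint, the power-mean inequality gives
`(x + y)^(m-1) ≤ 2^(m-2) (x^(m-1) + y^(m-1))`.
-/

open Real Set

section Scalar

variable {x y : ℝ}

lemma rpow_sub_one_mul_self (hx : 0 ≤ x) {p : ℝ} (hp : p ≠ 0) : x ^ (p - 1) * x = x ^ p := by
  rw [← rpow_add_one' hx (by simpa using hp), sub_add_cancel]

lemma rpow_sub_two_mul_sq (hx : 0 ≤ x) {p : ℝ} (hp : p ≠ 0) : x ^ (p - 2) * x ^ 2 = x ^ p := by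
  rw [← rpow_natCast, ← rpow_add' hx (by simpa using hp)]
  norm_num

lemma sq_rpow_div_two (hx : 0 ≤ x) (p : ℝ) : (x ^ 2) ^ (p / 2) = x ^ p := by
  rw [← rpow_natCast, ← rpow_mul hx, Nat.cast_ofNat, mul_div_cancel₀ p two_ne_zero]

lemma rpow_sub_le_sub_rpow {p : ℝ} (hp : 1 ≤ p) (hy : 0 ≤ y) (hyx : y ≤ x) :
    (x - y) ^ p ≤ x ^ p - y ^ p := by
  have := add_rpow_le_rpow_add (sub_nonneg.2 hyx) hy hp
  rw [sub_add_cancel] at this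
  linarith

lemma add_rpow_le_two_rpow_mul {p : ℝ} (hp : 1 ≤ p) (hx : 0 ≤ x) (hy : 0 ≤ y) :
    (x + y) ^ p ≤ 2 ^ (p - 1) * (x ^ p + y ^ p) := by
  lift x to NNReal using hx
  lift y to NNReal using hy
  exact_mod_cast NNReal.rpow_add_le_mul_rpow_add_rpow x y hp

variable {m : ℝ}

lemma two_rpow_mul_abs_sub_rpow_le (hm : 2 ≤ m) (hx : 0 ≤ x) (hy : 0 ≤ y) :
    (2:ℝ) ^ (2 - m) * |x - y| ^ m ≤ (x ^ (m - 1) - y ^ (m - 1)) * (x - y) := by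
  wlog hyx : y ≤ x generalizing x y
  · have := this hy hx (le_of_not_ge hyx)
    rw [abs_sub_comm]
    linarith
  have hd : 0 ≤ x - y := sub_nonneg.2 hyx
  have h2 : (2:ℝ) ^ (2 - m) ≤ 1 := rpow_le_one_of_one_le_of_nonpos one_le_two (by linarith)
  calc (2:ℝ) ^ (2 - m) * |x - y| ^ m ≤ (x - y) ^ m := by
        rw [abs_of_nonneg hd]
        exact mul_le_of_le_one_left (rpow_nonneg hd m) h2
    _ = (x - y) ^ (m - 1) * (x - y) := (rpow_sub_one_mul_self hd (by linarith)).symm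
    _ ≤ (x ^ (m - 1) - y ^ (m - 1)) * (x - y) :=
        mul_le_mul_of_nonneg_right (rpow_sub_le_sub_rpow (by linarith) hy hyx) hd

lemma two_rpow_mul_add_rpow_le (hm : 2 ≤ m) (hx : 0 ≤ x) (hy : 0 ≤ y) :
    (2:ℝ) ^ (2 - m) * (x + y) ^ m ≤ (x ^ (m - 1) + y ^ (m - 1)) * (x + y) := by
  have hs : 0 ≤ x + y := add_nonneg hx hy
  have h2 : (2:ℝ) ^ (2 - m) * 2 ^ (m - 2) = 1 := by
    rw [← rpow_add two_pos, sub_add_sub_cancel', sub_self, rpow_zero]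
  calc (2:ℝ) ^ (2 - m) * (x + y) ^ m = 2 ^ (2 - m) * (x + y) ^ (m - 1) * (x + y) := by
        rw [mul_assoc, rpow_sub_one_mul_self hs (by linarith)]
    _ ≤ 2 ^ (2 - m) * (2 ^ (m - 2) * (x ^ (m - 1) + y ^ (m - 1))) * (x + y) := by
        have := add_rpow_le_two_rpow_mul (p := m - 1) (by linarith) hx hy
        rw [sub_sub, one_add_one_eq_two] at this
        gcongr
    _ = (x ^ (m - 1) + y ^ (m - 1)) * (x + y) := by rw [← mul_assoc, h2, one_mul]

lemma tartar_scalar {s : ℝ} (hm : 2 ≤ m) (hx : 0 ≤ x) (hy : 0 ≤ y)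
    (hs : s ∈ Icc ((x - y) ^ 2) ((x + y) ^ 2)) :
    (2:ℝ) ^ (2 - m) * s ^ (m / 2) ≤
      x ^ m + y ^ m - (x ^ (m - 2) + y ^ (m - 2)) * (x ^ 2 + y ^ 2 - s) / 2 := by
  set k := x ^ (m - 2) + y ^ (m - 2)
  have hk : 0 ≤ k := add_nonneg (rpow_nonneg hx _) (rpow_nonneg hy _)
  let F : ℝ → ℝ := fun s ↦ (2:ℝ) ^ (2 - m) * s ^ (m / 2) - k / 2 * s
  have hF : ConvexOn ℝ (Ici 0) F :=
    ((convexOn_rpow (by linarith)).smul (rpow_nonneg zero_le_two _)).sub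
      ((concaveOn_id (convex_Ici 0)).smul (by positivity))
  have hx1 : x ^ (m - 1) = x ^ (m - 2) * x := by
    rw [← rpow_sub_one_mul_self hx (by linarith : m - 1 ≠ 0), sub_sub, one_add_one_eq_two]
  have hy1 : y ^ (m - 1) = y ^ (m - 2) * y := by
    rw [← rpow_sub_one_mul_self hy (by linarith : m - 1 ≠ 0), sub_sub, one_add_one_eq_two]
  have hxm := rpow_sub_two_mul_sq hx (by linarith : m ≠ 0)
  have hym := rpow_sub_two_mul_sq hy (by linarith : m ≠ 0)
  have hF_left : F ((x - y) ^ 2) ≤ x ^ m + y ^ m - k * (x ^ 2 + y ^ 2) / 2 := by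
    have := two_rpow_mul_abs_sub_rpow_le hm hx hy
    simp only [F, ← sq_abs (x - y), sq_rpow_div_two (abs_nonneg _)]
    rw [hx1, hy1] at this
    rw [← hxm, ← hym]
    linear_combination this - k / 2 * sq_abs (x - y)
  have hF_right : F ((x + y) ^ 2) ≤ x ^ m + y ^ m - k * (x ^ 2 + y ^ 2) / 2 := by
    have := two_rpow_mul_add_rpow_le hm hx hy
    simp only [F, sq_rpow_div_two (add_nonneg hx hy)]
    rw [hx1, hy1] at this
    rw [← hxm, ← hym]
    linear_combination this
  have hFs : F s ≤ x ^ m + y ^ m - k * (x ^ 2 + y ^ 2) / 2 :=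
    (hF.le_max_of_mem_Icc (sq_nonneg (x - y)) (sq_nonneg (x + y)) hs).trans
      (max_le hF_left hF_right)
  simp only [F] at hFs
  linarith

end Scalar

lemma inner_rpow_smul_sub_rpow_smul {E : Type*} [NormedAddCommGroup E] [InnerProductSpace ℝ E]
    {m : ℝ} (hm : m ≠ 0) (a b : E) :
    inner ℝ (‖a‖ ^ (m - 2) • a - ‖b‖ ^ (m - 2) • b) (a - b) =
      ‖a‖ ^ m + ‖b‖ ^ m - (‖a‖ ^ (m - 2) + ‖b‖ ^ (m - 2)) * (‖a‖ ^ 2 + ‖b‖ ^ 2 - ‖a - b‖ ^ 2) / 2 := by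
  rw [← rpow_sub_two_mul_sq (norm_nonneg a) hm, ← rpow_sub_two_mul_sq (norm_nonneg b) hm,
    norm_sub_sq_real, inner_sub_left, inner_sub_right, inner_sub_right, real_inner_smul_left,
    real_inner_smul_left, real_inner_smul_left, real_inner_smul_left, real_inner_self_eq_norm_sq,
    real_inner_self_eq_norm_sq, real_inner_comm b a]
  ring

/-- Tartar's inequality, degenerate case `m ≥ 2`:
`(|a|^(m-2) a − |b|^(m-2) b) · (a − b) ≥ 2^(2−m) |a − b|^m`. -/
theorem stmt2 {N : ℕ} (m : ℝ) (hm : 2 ≤ m) (a b : EuclideanSpace ℝ (Fin N)) :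
    (2:ℝ) ^ (2 - m) * ‖a - b‖ ^ m ≤
      inner ℝ ((‖a‖ ^ (m - 2)) • a - (‖b‖ ^ (m - 2)) • b) (a - b) := by
  have hs : ‖a - b‖ ^ 2 ∈ Icc ((‖a‖ - ‖b‖) ^ 2) ((‖a‖ + ‖b‖) ^ 2) :=
    ⟨sq_le_sq.2 (by simpa using abs_norm_sub_norm_le a b),
      pow_le_pow_left₀ (norm_nonneg _) (norm_sub_le a b) 2⟩
  rw [inner_rpow_smul_sub_rpow_smul (by linarith) a b, ← sq_rpow_div_two (norm_nonneg _)]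
  exact tartar_scalar hm (norm_nonneg a) (norm_nonneg b) hs
end

section
/- For all vectors a, b ∈ ℝ^N and all m with 1 < m < 2 and a, b not both zero, the inequality (|a|^(m-2) a − |b|^(m-2) b) · (a − b) ≥ (m−1) · |a − b|² / (|a| + |b|)^(2−m) holds. -/
/-! With `p = m - 1 ∈ (0, 1]`, `α = ‖a‖`, `β = ‖b‖` and `t = ⟪a, b⟫`, both sides of the inequality
are affine in `t`, so by Cauchy–Schwarz it suffices to check the endpoints `t = ± α β`, where `a`
and `b` are collinear. At `t = α β` the inequality reduces to the concavity estimate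
`p (α - β) (α + β) ^ (p - 1) ≤ α ^ p - β ^ p` for `β ≤ α`, a consequence of the tangent line of
`x ^ p` at `α`; at `t = - α β` it reduces to `p (α + β) ^ p ≤ α ^ p + β ^ p`, a consequence of the
subadditivity of `x ^ p`. -/

open Real

open scoped RealInnerProductSpace

section

variable {p : ℝ}

lemma rpow_le_tangent_line (hp0 : 0 ≤ p) (hp1 : p ≤ 1) {x y : ℝ} (hx : 0 < x) (hy : 0 ≤ y) :
    y ^ p ≤ x ^ p + p * x ^ (p - 1) * (y - x) := by
  have hbernoulli := rpow_one_add_le_one_add_mul_self (s := y / x - 1)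
    (by linarith [div_nonneg hy hx.le]) hp0 hp1
  rw [add_sub_cancel, div_rpow hy hx.le, div_le_iff₀ (rpow_pos_of_pos hx p)] at hbernoulli
  calc y ^ p ≤ (1 + p * (y / x - 1)) * x ^ p := hbernoulli
    _ = x ^ p + p * (x ^ p / x) * (y - x) := by field_simp
    _ = x ^ p + p * x ^ (p - 1) * (y - x) := by rw [rpow_sub_one hx.ne']

lemma mul_mul_add_rpow_sub_one_le_rpow_sub_rpow (hp0 : 0 ≤ p) (hp1 : p ≤ 1) {α β : ℝ}
    (hβ : 0 ≤ β) (hβα : β ≤ α) :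
    p * (α - β) * (α + β) ^ (p - 1) ≤ α ^ p - β ^ p := by
  rcases (hβ.trans hβα).eq_or_lt with rfl | hα
  · obtain rfl : β = 0 := le_antisymm hβα hβ
    simp
  have hmono : (α + β) ^ (p - 1) ≤ α ^ (p - 1) :=
    rpow_le_rpow_of_nonpos hα (by linarith) (by linarith)
  calc p * (α - β) * (α + β) ^ (p - 1) ≤ p * (α - β) * α ^ (p - 1) :=
        mul_le_mul_of_nonneg_left hmono (mul_nonneg hp0 (by linarith))
    _ ≤ α ^ p - β ^ p := by linear_combination rpow_le_tangent_line hp0 hp1 hα hβ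

lemma mul_sq_mul_add_rpow_sub_one_le (hp0 : 0 ≤ p) (hp1 : p ≤ 1) {α β : ℝ}
    (hα : 0 ≤ α) (hβ : 0 ≤ β) :
    p * (α - β) ^ 2 * (α + β) ^ (p - 1) ≤ (α ^ p - β ^ p) * (α - β) := by
  rcases le_total β α with h | h
  · linear_combination (α - β) * mul_mul_add_rpow_sub_one_le_rpow_sub_rpow hp0 hp1 hβ h
  · have := mul_mul_add_rpow_sub_one_le_rpow_sub_rpow hp0 hp1 hα h
    rw [add_comm] at this
    linear_combination (β - α) * this

lemma mul_add_rpow_le_rpow_add_rpow (hp0 : 0 ≤ p) (hp1 : p ≤ 1) {α β : ℝ}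
    (hα : 0 ≤ α) (hβ : 0 ≤ β) :
    p * (α + β) ^ p ≤ α ^ p + β ^ p :=
  calc p * (α + β) ^ p ≤ 1 * (α + β) ^ p := mul_le_mul_of_nonneg_right hp1 (by positivity)
    _ ≤ α ^ p + β ^ p := by rw [one_mul]; exact rpow_add_le_add_rpow hα hβ hp0 hp1

lemma add_mul_nonneg_of_mem_Icc {c d u v x : ℝ} (hx : x ∈ Set.Icc u v) (hu : 0 ≤ c + d * u)
    (hv : 0 ≤ c + d * v) : 0 ≤ c + d * x := by
  rcases le_total 0 d with hd | hd
  · linarith [mul_le_mul_of_nonneg_left hx.1 hd]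
  · linarith [mul_le_mul_of_nonpos_left hx.2 hd]

lemma tartar_scalar_s3 (hp0 : 0 < p) (hp1 : p ≤ 1) {α β t : ℝ} (hα : 0 ≤ α) (hβ : 0 ≤ β)
    (ht : |t| ≤ α * β) :
    p * (α ^ 2 + β ^ 2 - 2 * t) * (α + β) ^ (p - 1) ≤
      α ^ (p - 1) * α ^ 2 + β ^ (p - 1) * β ^ 2 - (α ^ (p - 1) + β ^ (p - 1)) * t := by
  have hself {x : ℝ} (hx : 0 ≤ x) : x ^ (p - 1) * x = x ^ p := by
    rw [← rpow_add_one' hx (by linarith), sub_add_cancel]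
  have hαβ := add_nonneg hα hβ
  have := add_mul_nonneg_of_mem_Icc (abs_le.1 ht)
    (c := α ^ (p - 1) * α ^ 2 + β ^ (p - 1) * β ^ 2 - p * (α ^ 2 + β ^ 2) * (α + β) ^ (p - 1))
    (d := 2 * p * (α + β) ^ (p - 1) - (α ^ (p - 1) + β ^ (p - 1)))
    (by linear_combination (α + β) * mul_add_rpow_le_rpow_add_rpow hp0.le hp1 hα hβ
          - (α + β) * hself hα - (α + β) * hself hβ + p * (α + β) * hself hαβ)
    (by linear_combination mul_sq_mul_add_rpow_sub_one_le hp0.le hp1 hα hβ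
          - (α - β) * hself hα + (α - β) * hself hβ)
  linear_combination this

end

theorem tartar_inequality {E : Type*} [NormedAddCommGroup E] [InnerProductSpace ℝ E]
    {p : ℝ} (hp0 : 0 < p) (hp1 : p ≤ 1) (a b : E) :
    p * ‖a - b‖ ^ 2 * (‖a‖ + ‖b‖) ^ (p - 1) ≤
      ⟪‖a‖ ^ (p - 1) • a - ‖b‖ ^ (p - 1) • b, a - b⟫ := by
  have hinner : ⟪‖a‖ ^ (p - 1) • a - ‖b‖ ^ (p - 1) • b, a - b⟫ =
      ‖a‖ ^ (p - 1) * ‖a‖ ^ 2 + ‖b‖ ^ (p - 1) * ‖b‖ ^ 2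
        - (‖a‖ ^ (p - 1) + ‖b‖ ^ (p - 1)) * ⟪a, b⟫ := by
    simp only [inner_sub_left, inner_sub_right, real_inner_smul_left, real_inner_self_eq_norm_sq,
      real_inner_comm b a]
    ring
  rw [hinner, norm_sub_sq_real]
  linear_combination
    tartar_scalar_s3 hp0 hp1 (norm_nonneg a) (norm_nonneg b) (abs_real_inner_le_norm a b)

open Classical in
theorem stmt3_general {N : ℕ} (m : ℝ) (hm1 : 1 < m) (hm2 : m < 2)
    (a b : EuclideanSpace ℝ (Fin N)) :
    (m - 1) * ‖a - b‖ ^ 2 / (‖a‖ + ‖b‖) ^ (2 - m) ≤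
      inner ℝ ((if a = 0 then 0 else (‖a‖ ^ (m - 2)) • a)
        - (if b = 0 then 0 else (‖b‖ ^ (m - 2)) • b)) (a - b) := by
  have hif (x : EuclideanSpace ℝ (Fin N)) :
      (if x = 0 then 0 else ‖x‖ ^ (m - 2) • x) = ‖x‖ ^ (m - 2) • x :=
    ite_eq_right_iff.2 fun hx => by simp [hx]
  have h := tartar_inequality (p := m - 1) (by linarith) (by linarith) a b
  rw [show m - 1 - 1 = m - 2 by ring] at h
  rwa [hif, hif, div_eq_mul_inv, ← rpow_neg (by positivity), neg_sub]

open Classical in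
/-- Tartar's inequality, singular case `1 < m < 2`:
`(|a|^(m-2) a − |b|^(m-2) b) · (a − b) ≥ (m−1) |a − b|² / (|a| + |b|)^(2−m)`,
where `|a|^(m−2) a` is interpreted as `0` when `a = 0`. -/
theorem stmt3 {N : ℕ} (m : ℝ) (hm1 : 1 < m) (hm2 : m < 2)
    (a b : EuclideanSpace ℝ (Fin N)) (hab : a ≠ 0 ∨ b ≠ 0) :
    (m - 1) * ‖a - b‖ ^ 2 / (‖a‖ + ‖b‖) ^ (2 - m) ≤
      inner ℝ ((if a = 0 then 0 else (‖a‖ ^ (m - 2)) • a)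
        - (if b = 0 then 0 else (‖b‖ ^ (m - 2)) • b)) (a - b) :=
  stmt3_general m hm1 hm2 a b
end

section
/- Let z : (0,∞) → ℝ be positive and differentiable and suppose z'(s)·z(s)^(p+1) + C₁·z(s)^(m+p) ≤ C₂·z(s)^(p+1) for all s > 0, where C₁, C₂ > 0, m > 2, p ≥ 0. Then z'(s) + C₁ z(s)^(m−1) ≤ C₂ for all s > 0, and consequently z(s) ≤ (C₂/C₁)^(1/(m−1)) + (C₁(m−2)s)^(−1/(m−2)) for all s > 0. -/
open Set Real


private lemma ghid_add_rpow (a b q : ℝ) (ha : 0 ≤ a) (hb : 0 ≤ b) (hq : 1 ≤ q) :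
    a ^ q + b ^ q ≤ (a + b) ^ q := by
  have := NNReal.add_rpow_le_rpow_add a.toNNReal b.toNNReal hq
  rw [← NNReal.coe_le_coe] at this
  push_cast at this
  rwa [Real.coe_toNNReal a ha, Real.coe_toNNReal b hb] at this

/-- Reduction plus Ghidaglia lemma: if a positive differentiable `z` on `(0,∞)`
satisfies `z' z^(p+1) + C₁ z^(m+p) ≤ C₂ z^(p+1)`, then `z' + C₁ z^(m−1) ≤ C₂` and
`z s ≤ (C₂/C₁)^(1/(m−1)) + (C₁(m−2)s)^(−1/(m−2))` for `s > 0`. -/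
theorem stmt12 (C₁ C₂ m p : ℝ) (hC₁ : 0 < C₁) (hC₂ : 0 < C₂) (hm : 2 < m) (hp : 0 ≤ p)
    (z : ℝ → ℝ) (hpos : ∀ s, 0 < s → 0 < z s)
    (hdiff : ∀ s, 0 < s → DifferentiableAt ℝ z s)
    (hineq : ∀ s, 0 < s →
      deriv z s * z s ^ (p + 1) + C₁ * z s ^ (m + p) ≤ C₂ * z s ^ (p + 1)) :
    (∀ s, 0 < s → deriv z s + C₁ * z s ^ (m - 1) ≤ C₂) ∧
    (∀ s, 0 < s →
      z s ≤ (C₂ / C₁) ^ (1 / (m - 1)) + (C₁ * (m - 2) * s) ^ (-(1 / (m - 2)))) := by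
  have hm1 : (0:ℝ) < m - 1 := by linarith
  have hr : (0:ℝ) < m - 2 := by linarith
  set K : ℝ := (C₂ / C₁) ^ (1 / (m - 1)) with hKdef
  have hKpos : 0 < K := rpow_pos_of_pos (div_pos hC₂ hC₁) _
  have hKpow : C₁ * K ^ (m - 1) = C₂ := by
    have h : ((C₂ / C₁) ^ (1 / (m - 1))) ^ (m - 1) = C₂ / C₁ := by
      rw [← Real.rpow_mul (div_pos hC₂ hC₁).le, one_div, inv_mul_cancel₀ hm1.ne', rpow_one]
    rw [hKdef, h]
    field_simp
  -- Part 1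
  have part1 : ∀ s, 0 < s → deriv z s + C₁ * z s ^ (m - 1) ≤ C₂ := by
    intro s hs
    have hzs := hpos s hs
    have hpow : (0:ℝ) < z s ^ (p + 1) := rpow_pos_of_pos hzs _
    have h := hineq s hs
    have hsplit : z s ^ (m + p) = z s ^ (m - 1) * z s ^ (p + 1) := by
      rw [← Real.rpow_add hzs]; ring_nf
    rw [hsplit] at h
    have h2 : (deriv z s + C₁ * z s ^ (m - 1)) * z s ^ (p + 1) ≤ C₂ * z s ^ (p + 1) := by
      nlinarith [h]
    exact le_of_mul_le_mul_right h2 hpow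
  refine ⟨part1, ?_⟩
  -- key differential inequality above K
  have key : ∀ s, 0 < s → K < z s → deriv z s ≤ -C₁ * (z s - K) ^ (m - 1) := by
    intro s hs hK
    have h1 := part1 s hs
    have hsum : (z s - K) ^ (m - 1) + K ^ (m - 1) ≤ z s ^ (m - 1) := by
      have h := ghid_add_rpow (z s - K) K (m - 1) (by linarith) hKpos.le (by linarith)
      rwa [sub_add_cancel] at h
    nlinarith [mul_le_mul_of_nonneg_left hsum hC₁.le]
  have hcont : ∀ s : ℝ, 0 < s → ContinuousAt z s := fun s hs => (hdiff s hs).continuousAt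
  -- Claim 1 : monotonicity of φ t = (z t - K)^(-(m-2)) - C₁(m-2) t on intervals where z > K
  have claim1 : ∀ a b : ℝ, 0 < a → a ≤ b → (∀ t ∈ Icc a b, K < z t) →
      (z a - K) ^ (-(m - 2)) + C₁ * (m - 2) * (b - a) ≤ (z b - K) ^ (-(m - 2)) := by
    intro a b ha hab hmem
    set ψ : ℝ → ℝ := fun t => (z t - K) ^ (-(m - 2)) - C₁ * (m - 2) * t with hψdef
    have hder : ∀ t ∈ Icc a b, HasDerivAt ψ
        (deriv z t * (-(m - 2)) * (z t - K) ^ (-(m - 2) - 1) - C₁ * (m - 2)) t := by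
      intro t ht
      have ht0 : 0 < t := lt_of_lt_of_le ha ht.1
      have hu : 0 < z t - K := sub_pos.2 (hmem t ht)
      have h1 : HasDerivAt (fun t => z t - K) (deriv z t) t :=
        ((hdiff t ht0).hasDerivAt).sub_const K
      have h2 := h1.rpow_const (p := -(m - 2)) (Or.inl hu.ne')
      have h3 : HasDerivAt (fun t : ℝ => C₁ * (m - 2) * t) (C₁ * (m - 2)) t := by
        simpa using (hasDerivAt_id t).const_mul (C₁ * (m - 2))
      exact h2.sub h3
    have hmono : MonotoneOn ψ (Icc a b) := by
      apply monotoneOn_of_deriv_nonneg (convex_Icc a b)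
      · exact fun t ht => ((hder t ht).continuousAt).continuousWithinAt
      · intro t ht
        rw [interior_Icc] at ht
        exact ((hder t (Ioo_subset_Icc_self ht)).differentiableAt).differentiableWithinAt
      · intro t ht
        rw [interior_Icc] at ht
        have ht' := Ioo_subset_Icc_self ht
        rw [(hder t ht').deriv]
        have ht0 : 0 < t := lt_of_lt_of_le ha ht'.1
        have hu : 0 < z t - K := sub_pos.2 (hmem t ht')
        have hupow : 0 < (z t - K) ^ (-(m - 2) - 1) := rpow_pos_of_pos hu _
        have hd := key t ht0 (hmem t ht')
        have hmul : (-C₁ * (z t - K) ^ (m - 1)) * (-(m - 2)) ≤ deriv z t * (-(m - 2)) := by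
          exact mul_le_mul_of_nonpos_right hd (by linarith)
        have hmul2 : (-C₁ * (z t - K) ^ (m - 1)) * (-(m - 2)) * (z t - K) ^ (-(m - 2) - 1) ≤
            deriv z t * (-(m - 2)) * (z t - K) ^ (-(m - 2) - 1) :=
          mul_le_mul_of_nonneg_right hmul hupow.le
        have hcomb : (z t - K) ^ (m - 1) * (z t - K) ^ (-(m - 2) - 1) = 1 := by
          rw [← Real.rpow_add hu]
          have he : m - 1 + (-(m - 2) - 1) = 0 := by ring
          rw [he, rpow_zero]
        have heq : -C₁ * (z t - K) ^ (m - 1) * -(m - 2) * (z t - K) ^ (-(m - 2) - 1)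
            = C₁ * (m - 2) := by
          linear_combination (C₁ * (m - 2)) * hcomb
        linarith [hmul2, heq]
    have := hmono (left_mem_Icc.2 hab) (right_mem_Icc.2 hab) hab
    simp only [hψdef] at this
    linarith
  -- final bound
  intro s hs
  by_cases hzK : z s ≤ K
  · have : 0 < (C₁ * (m - 2) * s) ^ (-(1 / (m - 2))) :=
      rpow_pos_of_pos (by positivity) _
    linarith
  push_neg at hzK
  -- Claim 2 : z stays above K on (0, s]
  have claim2 : ∀ a, 0 < a → a ≤ s → K < z a := by
    intro a ha has
    by_contra hle
    push_neg at hle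
    have hane : a ≠ s := fun h => by rw [h] at hle; exact absurd hle (not_le.2 hzK)
    have has' : a < s := lt_of_le_of_ne has hane
    set S : Set ℝ := {t ∈ Icc a s | z t ≤ K} with hSdef
    have hSne : S.Nonempty := ⟨a, ⟨left_mem_Icc.2 has, hle⟩⟩
    have hSbdd : BddAbove S := ⟨s, fun t ht => ht.1.2⟩
    set b : ℝ := sSup S with hbdef
    have hbmem : b ∈ Icc a s := ⟨le_csSup hSbdd ⟨left_mem_Icc.2 has, hle⟩,
      csSup_le hSne fun t ht => ht.1.2⟩
    have hb0 : 0 < b := lt_of_lt_of_le ha hbmem.1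
    have hzb_le : z b ≤ K := by
      by_contra hgt
      push_neg at hgt
      have hcb := hcont b hb0
      have hev : ∀ᶠ t in nhds b, K < z t := continuousAt_const.eventually_lt hcb hgt
      obtain ⟨ε, hε, hball⟩ := Metric.eventually_nhds_iff.1 hev
      obtain ⟨x, hxS, hxb⟩ := exists_lt_of_lt_csSup hSne (show b - ε < b by linarith)
      have hxle : x ≤ b := le_csSup hSbdd hxS
      have : K < z x := hball (by rw [Real.dist_eq]; rw [abs_lt]; constructor <;> linarith)
      exact absurd hxS.2 (not_le.2 this)
    have hbs : b < s := lt_of_le_of_ne hbmem.2 (fun h => by rw [h] at hzb_le; linarith)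
    have habove : ∀ t, b < t → t ≤ s → K < z t := by
      intro t hbt hts
      by_contra hle2
      push_neg at hle2
      have : t ∈ S := ⟨⟨le_trans hbmem.1 hbt.le, hts⟩, hle2⟩
      exact absurd (le_csSup hSbdd this) (not_le.2 hbt)
    have hzb_ge : K ≤ z b := by
      have hne : Filter.NeBot (nhdsWithin b (Ioi b)) := nhdsGT_neBot b
      refine ge_of_tendsto ((show ContinuousWithinAt z (Ioi b) b from (hcont b hb0).continuousWithinAt).tendsto) ?_
      filter_upwards [Ioo_mem_nhdsGT_of_mem (left_mem_Ico.2 hbs)] with t ht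
      exact (habove t ht.1 ht.2.le).le
    have hzb : z b = K := le_antisymm hzb_le hzb_ge
    -- pick c close to b
    set B : ℝ := (z s - K) ^ (-(m - 2)) with hBdef
    have hBpos : 0 < B := rpow_pos_of_pos (sub_pos.2 hzK) _
    set ε : ℝ := B ^ (-(1 / (m - 2))) with hεdef
    have hεpos : 0 < ε := rpow_pos_of_pos hBpos _
    have hεpow : ε ^ (-(m - 2)) = B := by
      rw [hεdef, ← Real.rpow_mul hBpos.le]
      have he : -(1 / (m - 2)) * -(m - 2) = 1 := by field_simp
      rw [he, rpow_one]
    have hev1 : ∀ᶠ t in nhdsWithin b (Ioi b), z t < K + ε := by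
      have : ∀ᶠ t in nhds b, z t < K + ε :=
        (hcont b hb0).eventually_lt continuousAt_const (by rw [hzb]; linarith)
      exact this.filter_mono nhdsWithin_le_nhds
    have hev2 : Ioo b s ∈ nhdsWithin b (Ioi b) := Ioo_mem_nhdsGT_of_mem (left_mem_Ico.2 hbs)
    have hne : Filter.NeBot (nhdsWithin b (Ioi b)) := nhdsGT_neBot b
    obtain ⟨c, hc1, hc2⟩ := (hev1.and (Filter.eventually_of_mem hev2 (fun t ht => ht))).exists
    have hc0 : 0 < c := lt_trans hb0 hc2.1
    have hcK : K < z c := habove c hc2.1 hc2.2.le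
    have hmemc : ∀ t ∈ Icc c s, K < z t := fun t ht => habove t (lt_of_lt_of_le hc2.1 ht.1) ht.2
    have hclaim := claim1 c s hc0 hc2.2.le hmemc
    have hφc : B < (z c - K) ^ (-(m - 2)) := by
      rw [← hεpow]
      exact rpow_lt_rpow_of_neg (sub_pos.2 hcK) (by linarith) (by linarith)
    have hnn : 0 ≤ C₁ * (m - 2) * (s - c) := by
      have := hc2.2.le
      have : 0 ≤ s - c := by linarith [hc2.2]
      positivity
    rw [← hBdef] at hclaim
    linarith
  -- conclude via claim1 with a → 0
  have hbound : ∀ a, 0 < a → a < s → C₁ * (m - 2) * (s - a) ≤ (z s - K) ^ (-(m - 2)) := by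
    intro a ha has
    have hmem : ∀ t ∈ Icc a s, K < z t := fun t ht =>
      claim2 t (lt_of_lt_of_le ha ht.1) ht.2
    have h := claim1 a s ha has.le hmem
    have : 0 < (z a - K) ^ (-(m - 2)) :=
      rpow_pos_of_pos (sub_pos.2 (claim2 a ha has.le)) _
    linarith
  have hfinal : C₁ * (m - 2) * s ≤ (z s - K) ^ (-(m - 2)) := by
    by_contra hlt
    push_neg at hlt
    set φ : ℝ := (z s - K) ^ (-(m - 2)) with hφdef
    have hφ0 : 0 ≤ φ := (rpow_pos_of_pos (sub_pos.2 hzK) _).le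
    have hd : φ / (C₁ * (m - 2)) < s := by
      rw [div_lt_iff₀ (by positivity)]
      nlinarith
    set a : ℝ := (s - φ / (C₁ * (m - 2))) / 2 with hadef
    have hdpos : 0 ≤ φ / (C₁ * (m - 2)) := by positivity
    have ha : 0 < a := by rw [hadef]; linarith
    have has : a < s := by rw [hadef]; linarith
    have h := hbound a ha has
    have : C₁ * (m - 2) * (s - a) > φ := by
      have hx : C₁ * (m - 2) * (φ / (C₁ * (m - 2))) = φ := by field_simp
      rw [hadef]
      nlinarith [mul_pos (mul_pos hC₁ hr) (sub_pos.2 hd)]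
    linarith
  -- invert
  have hLpos : 0 < C₁ * (m - 2) * s := by positivity
  have h2 := Real.rpow_le_rpow_of_nonpos hLpos hfinal (neg_nonpos.2 (by positivity) : -(1 / (m - 2)) ≤ 0)
  have h3 : ((z s - K) ^ (-(m - 2))) ^ (-(1 / (m - 2))) = z s - K := by
    rw [← Real.rpow_mul (by linarith [sub_pos.2 hzK] : (0:ℝ) ≤ z s - K)]
    have : -(m - 2) * -(1 / (m - 2)) = 1 := by field_simp
    rw [this, rpow_one]
  rw [h3] at h2
  linarith
end
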